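/- arXiv:math/0512202 — 4 statements merged into one kernel-verified Lean document; each statement's English description precedes it below -/
import Mathlib

section
/- Let R be a finite-dimensional G-graded algebra over a field F that is graded simple (R² ≠ 0 and R has no nontrivial proper graded ideals), and let I be a minimal graded right ideal of R. Then I = aR for some homogeneous idempotent a ∈ I. -/
/-!
Since `R` is graded simple with `R² ≠ 0`, no nonzero graded right ideal squares to zero: otherwise
its right annihilator, a graded two-sided ideal, would be all of `R`, and then the left
annihilator of `R` would be a nonzero graded two-sided ideal. So a minimal graded right ideal `I`
contains a homogeneous `b` of degree `g` with `bI ≠ 0`. By minimality `bI = I`, so `b = bx` with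
`x ∈ I`; comparing degree-`g` components, `b = ba` with `a` the degree-`1` component of `x`.
Again by minimality the annihilator of `b` in `I` is zero, and it contains `a² - a`; finally
`aR ⊆ I` is a nonzero graded right ideal, hence equal to `I`.
-/

open DirectSum Function

theorem coe_decompose_map_of_mapsTo {ι M σ : Type*} [DecidableEq ι] [AddCommMonoid M]
    [SetLike σ M] [AddSubmonoidClass σ M] (ℳ : ι → σ) [Decomposition ℳ] (f : M →+ M)
    {τ : ι → ι} (hτ : Injective τ) (hf : ∀ i, ∀ x ∈ ℳ i, f x ∈ ℳ (τ i)) (x : M) (i : ι) :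
    (decompose ℳ (f x) (τ i) : M) = f (decompose ℳ x i) := by
  induction x using Decomposition.inductionOn ℳ with
  | zero => simp
  | @homogeneous j m =>
    by_cases hij : i = j
    · subst hij
      rw [decompose_of_mem_same ℳ m.2, decompose_of_mem_same ℳ (hf i m m.2)]
    · rw [decompose_of_mem_ne ℳ m.2 (Ne.symm hij),
        decompose_of_mem_ne ℳ (hf j m m.2) (hτ.ne (Ne.symm hij)), map_zero]
  | add m m' hm hm' =>
    simp only [map_add, decompose_add, DirectSum.add_apply, AddMemClass.coe_add, hm, hm']

section

variable {G : Type*} [DecidableEq G] {F : Type*} [Ring F]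
  {R : Type*} [NonUnitalRing R] [Module F R] {ℬ : G → Submodule F R} [Decomposition ℬ]

variable (ℬ) in
def IsGradedRightIdeal (I : Submodule F R) : Prop :=
  (∀ x ∈ I, ∀ r : R, x * r ∈ I) ∧ SetLike.IsHomogeneous ℬ I

theorem isGradedRightIdeal_top : IsGradedRightIdeal ℬ (⊤ : Submodule F R) :=
  ⟨fun _ _ _ => Submodule.mem_top, fun _ _ _ => Submodule.mem_top⟩

variable [Group G]

theorem coe_decompose_mul_of_mem_left
    (hmul : ∀ g h : G, ∀ x ∈ ℬ g, ∀ y ∈ ℬ h, x * y ∈ ℬ (g * h))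
    {g : G} {b : R} (hb : b ∈ ℬ g) (x : R) (h : G) :
    (decompose ℬ (b * x) (g * h) : R) = b * decompose ℬ x h :=
  coe_decompose_map_of_mapsTo ℬ (AddMonoidHom.mulLeft b) (mul_right_injective g)
    (fun h y hy => hmul g h b hb y hy) x h

theorem coe_decompose_mul_of_mem_right
    (hmul : ∀ g h : G, ∀ x ∈ ℬ g, ∀ y ∈ ℬ h, x * y ∈ ℬ (g * h))
    {g : G} {b : R} (hb : b ∈ ℬ g) (x : R) (h : G) :
    (decompose ℬ (x * b) (h * g) : R) = decompose ℬ x h * b :=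
  coe_decompose_map_of_mapsTo ℬ (AddMonoidHom.mulRight b) (mul_left_injective g)
    (fun h y hy => hmul h g y hy b hb) x h

theorem eq_zero_of_forall_mul_eq_zero
    (hmul : ∀ g h : G, ∀ x ∈ ℬ g, ∀ y ∈ ℬ h, x * y ∈ ℬ (g * h))
    (hR2 : ∃ x y : R, x * y ≠ 0)
    (hsimple : ∀ J : TwoSidedIdeal R, SetLike.IsHomogeneous ℬ J → J = ⊥ ∨ J = ⊤)
    {x : R} (hx : ∀ y, x * y = 0) : x = 0 := by
  classical
  let J : TwoSidedIdeal R := .mk' {x | ∀ y, x * y = 0} (by simp)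
    (fun hx hy z => by rw [add_mul, hx, hy, add_zero])
    (fun hx z => by rw [neg_mul, hx, neg_zero])
    (fun hy z => by rw [mul_assoc, hy, mul_zero])
    (fun hx z => by rw [mul_assoc, hx])
  have hmemJ (x : R) : x ∈ J ↔ ∀ y, x * y = 0 := TwoSidedIdeal.mem_mk' _ _ _ _ _ _ x
  have hJ : SetLike.IsHomogeneous ℬ J := by
    intro g x hx
    rw [hmemJ] at hx ⊢
    intro y
    rw [← sum_support_decompose ℬ y, Finset.mul_sum]
    refine Finset.sum_eq_zero fun h _ => ?_
    rw [← coe_decompose_mul_of_mem_right hmul (decompose ℬ y h).2, hx, decompose_zero,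
      DirectSum.zero_apply, ZeroMemClass.coe_zero]
  obtain hbot | htop := hsimple J hJ
  · rw [← TwoSidedIdeal.mem_bot R, ← hbot, hmemJ]
    exact hx
  · obtain ⟨u, v, huv⟩ := hR2
    exact absurd ((hmemJ u).1 (htop ▸ TwoSidedIdeal.mem_top R) v) huv

theorem IsGradedRightIdeal.mul_eq_zero_of_mul_self_eq_zero
    (hmul : ∀ g h : G, ∀ x ∈ ℬ g, ∀ y ∈ ℬ h, x * y ∈ ℬ (g * h))
    (hsimple : ∀ J : TwoSidedIdeal R, SetLike.IsHomogeneous ℬ J → J = ⊥ ∨ J = ⊤)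
    {I : Submodule F R} (hI : IsGradedRightIdeal ℬ I) (hII : ∀ x ∈ I, ∀ y ∈ I, x * y = 0)
    {x : R} (hx : x ∈ I) (r : R) : x * r = 0 := by
  classical
  let J : TwoSidedIdeal R := .mk' {y | ∀ x ∈ I, x * y = 0} (by simp)
    (fun hy hz x hx => by rw [mul_add, hy x hx, hz x hx, add_zero])
    (fun hy x hx => by rw [mul_neg, hy x hx, neg_zero])
    (fun {r _} hy x hx => by rw [← mul_assoc, hy _ (hI.1 x hx r)])
    (fun hy x hx => by rw [← mul_assoc, hy x hx, zero_mul])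
  have hmemJ (y : R) : y ∈ J ↔ ∀ x ∈ I, x * y = 0 := TwoSidedIdeal.mem_mk' _ _ _ _ _ _ y
  have hJ : SetLike.IsHomogeneous ℬ J := by
    intro h y hy
    rw [hmemJ] at hy ⊢
    intro x hx
    rw [← sum_support_decompose ℬ x, Finset.sum_mul]
    refine Finset.sum_eq_zero fun g _ => ?_
    rw [← coe_decompose_mul_of_mem_left hmul (decompose ℬ x g).2, hy _ (hI.2 g hx),
      decompose_zero, DirectSum.zero_apply, ZeroMemClass.coe_zero]
  obtain hbot | htop := hsimple J hJ
  · have hx0 : x ∈ J := (hmemJ x).2 fun y hy => hII y hy x hx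
    rw [hbot, TwoSidedIdeal.mem_bot] at hx0
    rw [hx0, zero_mul]
  · exact (hmemJ r).1 (htop ▸ TwoSidedIdeal.mem_top R) x hx

theorem IsGradedRightIdeal.exists_homogeneous_mul_ne_zero
    (hmul : ∀ g h : G, ∀ x ∈ ℬ g, ∀ y ∈ ℬ h, x * y ∈ ℬ (g * h))
    (hR2 : ∃ x y : R, x * y ≠ 0)
    (hsimple : ∀ J : TwoSidedIdeal R, SetLike.IsHomogeneous ℬ J → J = ⊥ ∨ J = ⊤)
    {I : Submodule F R} (hI : IsGradedRightIdeal ℬ I) (hIne : I ≠ ⊥) :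
    ∃ g, ∃ b ∈ ℬ g, b ∈ I ∧ ∃ c ∈ I, b * c ≠ 0 := by
  classical
  by_contra! hcon
  have hII : ∀ x ∈ I, ∀ c ∈ I, x * c = 0 := by
    intro x hx c hc
    rw [← sum_support_decompose ℬ x, Finset.sum_mul]
    exact Finset.sum_eq_zero fun g _ => hcon g _ (decompose ℬ x g).2 (hI.2 g hx) c hc
  refine hIne ((Submodule.eq_bot_iff I).2 fun x hx => ?_)
  exact eq_zero_of_forall_mul_eq_zero hmul hR2 hsimple
    (hI.mul_eq_zero_of_mul_self_eq_zero hmul hsimple hII hx)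

theorem IsGradedRightIdeal.map_mulLeft [SMulCommClass F R R]
    (hmul : ∀ g h : G, ∀ x ∈ ℬ g, ∀ y ∈ ℬ h, x * y ∈ ℬ (g * h))
    {I : Submodule F R} (hI : IsGradedRightIdeal ℬ I) {g : G} {b : R} (hb : b ∈ ℬ g) :
    IsGradedRightIdeal ℬ (I.map (LinearMap.mulLeft F b)) := by
  constructor
  · rintro _ ⟨x, hx, rfl⟩ r
    exact ⟨x * r, hI.1 x hx r, (mul_assoc b x r).symm⟩
  · rintro h _ ⟨x, hx, rfl⟩
    refine ⟨decompose ℬ x (g⁻¹ * h), hI.2 _ hx, ?_⟩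
    rw [LinearMap.mulLeft_apply, LinearMap.mulLeft_apply,
      ← coe_decompose_mul_of_mem_left hmul hb, mul_inv_cancel_left]

theorem IsGradedRightIdeal.inf_ker_mulLeft [SMulCommClass F R R]
    (hmul : ∀ g h : G, ∀ x ∈ ℬ g, ∀ y ∈ ℬ h, x * y ∈ ℬ (g * h))
    {I : Submodule F R} (hI : IsGradedRightIdeal ℬ I) {g : G} {b : R} (hb : b ∈ ℬ g) :
    IsGradedRightIdeal ℬ (I ⊓ LinearMap.ker (LinearMap.mulLeft F b)) := by
  simp only [IsGradedRightIdeal, SetLike.IsHomogeneous, Submodule.mem_inf, LinearMap.mem_ker,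
    LinearMap.mulLeft_apply]
  constructor
  · rintro x ⟨hx, hbx⟩ r
    exact ⟨hI.1 x hx r, by rw [← mul_assoc, hbx, zero_mul]⟩
  · rintro h x ⟨hx, hbx⟩
    refine ⟨hI.2 h hx, ?_⟩
    rw [← coe_decompose_mul_of_mem_left hmul hb, hbx, decompose_zero, DirectSum.zero_apply,
      ZeroMemClass.coe_zero]

theorem IsGradedRightIdeal.exists_idempotent_eq_range_mulLeft [SMulCommClass F R R]
    (hmul : ∀ g h : G, ∀ x ∈ ℬ g, ∀ y ∈ ℬ h, x * y ∈ ℬ (g * h))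
    (hR2 : ∃ x y : R, x * y ≠ 0)
    (hsimple : ∀ J : TwoSidedIdeal R, SetLike.IsHomogeneous ℬ J → J = ⊥ ∨ J = ⊤)
    {I : Submodule F R} (hI : IsGradedRightIdeal ℬ I) (hIne : I ≠ ⊥)
    (hImin : ∀ J, IsGradedRightIdeal ℬ J → J ≠ ⊥ → J ≤ I → J = I) :
    ∃ a ∈ I, a ∈ ℬ 1 ∧ a * a = a ∧ LinearMap.range (LinearMap.mulLeft F a) = I := by
  obtain ⟨g, b, hbg, hbI, c, hcI, hbc⟩ := hI.exists_homogeneous_mul_ne_zero hmul hR2 hsimple hIne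
  have hbI_eq : I.map (LinearMap.mulLeft F b) = I :=
    hImin _ (hI.map_mulLeft hmul hbg)
      (fun h => hbc <| by simpa [h] using Submodule.mem_map_of_mem (f := .mulLeft F b) hcI)
      (by rintro _ ⟨x, hx, rfl⟩; exact hI.1 b hbI x)
  obtain ⟨x, hxI, hbx⟩ := hbI_eq ▸ hbI
  set a := (decompose ℬ x 1 : R)
  have hbI1 : b * a = b := by
    rw [← coe_decompose_mul_of_mem_left hmul hbg, mul_one, ← LinearMap.mulLeft_apply (R := F),
      hbx, decompose_of_mem_same ℬ hbg]
  have haI : a ∈ I := hI.2 1 hxI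
  have hbne : b ≠ 0 := by rintro rfl; simp at hbc
  have hann : I ⊓ LinearMap.ker (LinearMap.mulLeft F b) = ⊥ := by
    by_contra hne
    have ha : a ∈ LinearMap.ker (LinearMap.mulLeft F b) :=
      (hImin _ (hI.inf_ker_mulLeft hmul hbg) hne inf_le_left ▸ haI).2
    exact hbne (by simpa [hbI1] using ha)
  have haa : a * a = a := by
    have : a * a - a ∈ I ⊓ LinearMap.ker (LinearMap.mulLeft F b) :=
      Submodule.mem_inf.2 ⟨sub_mem (hI.1 a haI a) haI, by simp [mul_sub, ← mul_assoc, hbI1]⟩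
    rwa [hann, Submodule.mem_bot, sub_eq_zero] at this
  refine ⟨a, haI, (decompose ℬ x 1).2, haa, ?_⟩
  rw [← Submodule.map_top]
  refine hImin _ (isGradedRightIdeal_top.map_mulLeft hmul (decompose ℬ x 1).2) ?_
    (by rintro _ ⟨r, -, rfl⟩; exact hI.1 a haI r)
  have hane : a ≠ 0 := by rintro ha; simp [ha, hbne.symm] at hbI1
  have ha : a ∈ (⊤ : Submodule F R).map (LinearMap.mulLeft F a) := ⟨a, Submodule.mem_top, haa⟩
  exact fun h => hane (by rwa [h, Submodule.mem_bot] at ha)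

end

theorem stmt_0_general {G : Type*} [Group G] [DecidableEq G] {F : Type*} [Field F]
    {R : Type*} [NonUnitalRing R] [Module F R] [SMulCommClass F R R]
    (ℬ : G → Submodule F R) [DirectSum.Decomposition ℬ]
    (hmul : ∀ g h : G, ∀ x ∈ ℬ g, ∀ y ∈ ℬ h, x * y ∈ ℬ (g * h))
    -- `R` is graded simple:
    (hR2 : ∃ x y : R, x * y ≠ 0)
    (hsimple : ∀ J : TwoSidedIdeal R,
      (∀ x ∈ J, ∀ g : G, ((DirectSum.decompose ℬ x) g : R) ∈ J) → J = ⊥ ∨ J = ⊤)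
    -- `I` is a graded right ideal:
    (I : Submodule F R)
    (hIr : ∀ x ∈ I, ∀ r : R, x * r ∈ I)
    (hIgr : ∀ x ∈ I, ∀ g : G, ((DirectSum.decompose ℬ x) g : R) ∈ I)
    (hIne : I ≠ ⊥)
    -- `I` is minimal among nonzero graded right ideals:
    (hImin : ∀ J : Submodule F R, (∀ x ∈ J, ∀ r : R, x * r ∈ J) →
      (∀ x ∈ J, ∀ g : G, ((DirectSum.decompose ℬ x) g : R) ∈ J) → J ≠ ⊥ → J ≤ I → J = I) :
    ∃ a ∈ I, (∃ g : G, a ∈ ℬ g) ∧ a * a = a ∧ ∀ x : R, x ∈ I ↔ ∃ r : R, x = a * r := by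
  have hI : IsGradedRightIdeal ℬ I := ⟨hIr, fun g x hx => hIgr x hx g⟩
  obtain ⟨a, haI, ha1, haa, hrange⟩ := hI.exists_idempotent_eq_range_mulLeft hmul hR2
    (fun J hJ => hsimple J fun x hx g => hJ g hx) hIne
    (fun J hJ => hImin J hJ.1 fun x hx g => hJ.2 g hx)
  refine ⟨a, haI, ⟨1, ha1⟩, haa, fun x => ?_⟩
  simp only [← hrange, LinearMap.mem_range, LinearMap.mulLeft_apply, eq_comm]

/-- In a finite-dimensional graded simple algebra, every minimal graded right ideal
is of the form `aR` for a homogeneous idempotent `a` belonging to it. -/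
theorem stmt_0 {G : Type*} [Group G] [DecidableEq G] {F : Type*} [Field F]
    {R : Type*} [NonUnitalRing R] [Module F R] [SMulCommClass F R R] [IsScalarTower F R R]
    [FiniteDimensional F R]
    (ℬ : G → Submodule F R) [DirectSum.Decomposition ℬ]
    (hmul : ∀ g h : G, ∀ x ∈ ℬ g, ∀ y ∈ ℬ h, x * y ∈ ℬ (g * h))
    -- `R` is graded simple:
    (hR2 : ∃ x y : R, x * y ≠ 0)
    (hsimple : ∀ J : TwoSidedIdeal R,
      (∀ x ∈ J, ∀ g : G, ((DirectSum.decompose ℬ x) g : R) ∈ J) → J = ⊥ ∨ J = ⊤)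
    -- `I` is a graded right ideal:
    (I : Submodule F R)
    (hIr : ∀ x ∈ I, ∀ r : R, x * r ∈ I)
    (hIgr : ∀ x ∈ I, ∀ g : G, ((DirectSum.decompose ℬ x) g : R) ∈ I)
    (hIne : I ≠ ⊥)
    -- `I` is minimal among nonzero graded right ideals:
    (hImin : ∀ J : Submodule F R, (∀ x ∈ J, ∀ r : R, x * r ∈ J) →
      (∀ x ∈ J, ∀ g : G, ((DirectSum.decompose ℬ x) g : R) ∈ J) → J ≠ ⊥ → J ≤ I → J = I) :
    ∃ a ∈ I, (∃ g : G, a ∈ ℬ g) ∧ a * a = a ∧ ∀ x : R, x ∈ I ↔ ∃ r : R, x = a * r :=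
  stmt_0_general ℬ hmul hR2 hsimple I hIr hIgr hIne hImin
end

section
/- Let C be a finite-dimensional graded simple algebra over an arbitrary field F with dim C_e = 1. Then C is a graded division algebra, i.e., every nonzero homogeneous element of C is invertible. -/
/-!
Let `e` span `C₁`. Graded simplicity makes the ideal generated by a nonzero homogeneous `x` all
of `C`; comparing identity components gives homogeneous `a`, `b` with `a * x * b = e`.

For `x = e` this forces `e * e ≠ 0`: otherwise, with `a` of degree `h`, the elements `aⁿ e` are
nonzero (as `aⁿ e bⁿ = e`) and of degree `hⁿ`, so finite dimensionality makes `h` of finite order,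
and then `aⁿ ∈ C₁ = F e` gives `aⁿ e = 0`. So a multiple `u` of `e` is idempotent. If a homogeneous
`y` has `y u = 0`, writing `u = a y b` with `b a y ∈ F u` gives `u = u² = a y (b a y) b = 0`;
applied to `y = x - x u` this makes `u` a right identity, and symmetrically a left one. Finally
`a x b = u` gives one-sided inverses of `x`, which are two-sided since `C` is finite-dimensional.
-/

open DirectSum

section Decomposition

variable {ι R M : Type*} [DecidableEq ι] [Semiring R] [AddCommMonoid M] [Module R M]
  {ℬ : ι → Submodule R M} [Decomposition ℬ]

theorem coe_decompose_mem_span_inter {S : Set M} (hS : ∀ s ∈ S, ∃ i, s ∈ ℬ i) {z : M}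
    (hz : z ∈ Submodule.span R S) (i : ι) :
    (decompose ℬ z i : M) ∈ Submodule.span R (S ∩ ℬ i) := by
  induction hz using Submodule.span_induction with
  | mem s hs =>
    obtain ⟨j, hj⟩ := hS s hs
    by_cases hji : j = i
    · subst hji
      rw [decompose_of_mem_same ℬ hj]
      exact Submodule.subset_span ⟨hs, hj⟩
    · rw [decompose_of_mem_ne ℬ hj hji]
      exact Submodule.zero_mem _
  | zero => simp
  | add x y _ _ hx hy =>
    rw [decompose_add, DirectSum.add_apply, Submodule.coe_add]
    exact Submodule.add_mem _ hx hy
  | smul a x _ hx =>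
    rw [decompose_smul, DirectSum.smul_apply, Submodule.coe_smul]
    exact Submodule.smul_mem _ _ hx

end Decomposition

section GradedMul

variable {ι R A : Type*} [DecidableEq ι] [Mul ι] [Semiring R] [NonUnitalNonAssocSemiring A]
  [Module R A] {ℬ : ι → Submodule R A} [Decomposition ℬ]

theorem coe_decompose_mul_of_mem_right_s6 [IsRightCancelMul ι]
    (hmul : ∀ i j : ι, ∀ x ∈ ℬ i, ∀ y ∈ ℬ j, x * y ∈ ℬ (i * j))
    {c : A} {k : ι} (hc : c ∈ ℬ k) (z : A) (i : ι) :
    (decompose ℬ (z * c) (i * k) : A) = decompose ℬ z i * c := by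
  induction z using Decomposition.inductionOn ℬ with
  | zero => simp
  | @homogeneous j z =>
    by_cases hji : j = i
    · subst hji
      rw [decompose_of_mem_same ℬ (hmul _ _ _ z.2 _ hc), decompose_of_mem_same ℬ z.2]
    · rw [decompose_of_mem_ne ℬ (hmul _ _ _ z.2 _ hc) (mt mul_right_cancel hji),
        decompose_of_mem_ne ℬ z.2 hji, zero_mul]
  | add z z' hz hz' =>
    rw [add_mul, decompose_add, DirectSum.add_apply, Submodule.coe_add, hz, hz',
      decompose_add, DirectSum.add_apply, Submodule.coe_add, add_mul]

theorem coe_decompose_mul_of_mem_left_s6 [IsLeftCancelMul ι]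
    (hmul : ∀ i j : ι, ∀ x ∈ ℬ i, ∀ y ∈ ℬ j, x * y ∈ ℬ (i * j))
    {c : A} {k : ι} (hc : c ∈ ℬ k) (z : A) (i : ι) :
    (decompose ℬ (c * z) (k * i) : A) = c * decompose ℬ z i := by
  induction z using Decomposition.inductionOn ℬ with
  | zero => simp
  | @homogeneous j z =>
    by_cases hji : j = i
    · subst hji
      rw [decompose_of_mem_same ℬ (hmul _ _ _ hc _ z.2), decompose_of_mem_same ℬ z.2]
    · rw [decompose_of_mem_ne ℬ (hmul _ _ _ hc _ z.2) (mt mul_left_cancel hji),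
        decompose_of_mem_ne ℬ z.2 hji, mul_zero]
  | add z z' hz hz' =>
    rw [mul_add, decompose_add, DirectSum.add_apply, Submodule.coe_add, hz, hz',
      decompose_add, DirectSum.add_apply, Submodule.coe_add, mul_add]

end GradedMul

section Simplicity

variable {ι R C : Type*} [DecidableEq ι] [CommRing R] [NonUnitalRing C] [Module R C]

variable (ℬ : ι → Submodule R C) [Decomposition ℬ] in
structure GradedSimple : Prop where
  exists_mul_ne_zero : ∃ x y : C, x * y ≠ 0
  eq_bot_or_eq_top : ∀ I : TwoSidedIdeal C, SetLike.IsHomogeneous ℬ I → I = ⊥ ∨ I = ⊤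

namespace GradedSimple

variable {ℬ : ι → Submodule R C} [Decomposition ℬ]

theorem eq_zero_of_forall_mul_eq_zero [Mul ι] [IsRightCancelMul ι]
    (hmul : ∀ i j : ι, ∀ x ∈ ℬ i, ∀ y ∈ ℬ j, x * y ∈ ℬ (i * j))
    (hC : GradedSimple ℬ) {a : C} (ha : ∀ i, ∀ c ∈ ℬ i, a * c = 0) : a = 0 := by
  have extend {y : C} (hy : ∀ i, ∀ c ∈ ℬ i, y * c = 0) (c : C) : y * c = 0 := by
    induction c using Decomposition.inductionOn ℬ with
    | zero => exact mul_zero y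
    | homogeneous c => exact hy _ _ c.2
    | add c c' h h' => rw [mul_add, h, h', add_zero]
  let I : TwoSidedIdeal C := .mk' {y | ∀ c, y * c = 0} zero_mul
    (fun hx hy c => by rw [add_mul, hx c, hy c, add_zero])
    (fun hx c => by rw [neg_mul, hx c, neg_zero])
    (fun hy c => by rw [mul_assoc, hy c, mul_zero])
    (fun hx c => by rw [mul_assoc, hx])
  have hmem (y : C) : y ∈ I ↔ ∀ c, y * c = 0 := TwoSidedIdeal.mem_mk' ..
  have hI : SetLike.IsHomogeneous ℬ I := fun i y hy =>
    (hmem _).2 <| extend fun j c hc => by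
      rw [← coe_decompose_mul_of_mem_right_s6 hmul hc, (hmem y).1 hy c,
        decompose_zero, DirectSum.zero_apply, ZeroMemClass.coe_zero]
  obtain ⟨x, y, hxy⟩ := hC.exists_mul_ne_zero
  rcases hC.eq_bot_or_eq_top I hI with hbot | htop
  · have haI : a ∈ I := (hmem a).2 (extend ha)
    rwa [hbot, TwoSidedIdeal.mem_bot] at haI
  · exact absurd ((hmem x).1 (htop ▸ TwoSidedIdeal.mem_top C) y) hxy

theorem eq_zero_of_forall_mul_eq_zero' [Mul ι] [IsLeftCancelMul ι]
    (hmul : ∀ i j : ι, ∀ x ∈ ℬ i, ∀ y ∈ ℬ j, x * y ∈ ℬ (i * j))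
    (hC : GradedSimple ℬ) {a : C} (ha : ∀ i, ∀ c ∈ ℬ i, c * a = 0) : a = 0 := by
  have extend {y : C} (hy : ∀ i, ∀ c ∈ ℬ i, c * y = 0) (c : C) : c * y = 0 := by
    induction c using Decomposition.inductionOn ℬ with
    | zero => exact zero_mul y
    | homogeneous c => exact hy _ _ c.2
    | add c c' h h' => rw [add_mul, h, h', add_zero]
  let I : TwoSidedIdeal C := .mk' {y | ∀ c, c * y = 0} mul_zero
    (fun hx hy c => by rw [mul_add, hx c, hy c, add_zero])
    (fun hx c => by rw [mul_neg, hx c, neg_zero])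
    (fun hy c => by rw [← mul_assoc, hy])
    (fun hx c => by rw [← mul_assoc, hx c, zero_mul])
  have hmem (y : C) : y ∈ I ↔ ∀ c, c * y = 0 := TwoSidedIdeal.mem_mk' ..
  have hI : SetLike.IsHomogeneous ℬ I := fun i y hy =>
    (hmem _).2 <| extend fun j c hc => by
      rw [← coe_decompose_mul_of_mem_left_s6 hmul hc, (hmem y).1 hy c,
        decompose_zero, DirectSum.zero_apply, ZeroMemClass.coe_zero]
  obtain ⟨x, y, hxy⟩ := hC.exists_mul_ne_zero
  rcases hC.eq_bot_or_eq_top I hI with hbot | htop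
  · have haI : a ∈ I := (hmem a).2 (extend ha)
    rwa [hbot, TwoSidedIdeal.mem_bot] at haI
  · exact absurd ((hmem y).1 (htop ▸ TwoSidedIdeal.mem_top C) x) hxy

variable [SMulCommClass R C C] [IsScalarTower R C C]

theorem span_eq_top (hC : GradedSimple ℬ) {S : Set C} (hS : ∀ s ∈ S, ∃ i, s ∈ ℬ i)
    (hSl : ∀ s ∈ S, ∀ i, ∀ c ∈ ℬ i, c * s ∈ S) (hSr : ∀ s ∈ S, ∀ i, ∀ c ∈ ℬ i, s * c ∈ S)
    (hS0 : ∃ s ∈ S, s ≠ 0) : Submodule.span R S = ⊤ := by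
  have mul_mem_left {y : C} (hy : y ∈ Submodule.span R S) (c : C) :
      c * y ∈ Submodule.span R S := by
    induction hy using Submodule.span_induction with
    | mem s hs =>
      induction c using Decomposition.inductionOn ℬ with
      | zero => simp
      | homogeneous c => exact Submodule.subset_span (hSl s hs _ _ c.2)
      | add c c' h h' => rw [add_mul]; exact Submodule.add_mem _ h h'
    | zero => simp
    | add x y _ _ hx hy => rw [mul_add]; exact Submodule.add_mem _ hx hy
    | smul a x _ hx => rw [mul_smul_comm]; exact Submodule.smul_mem _ _ hx
  have mul_mem_right {y : C} (hy : y ∈ Submodule.span R S) (c : C) :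
      y * c ∈ Submodule.span R S := by
    induction hy using Submodule.span_induction with
    | mem s hs =>
      induction c using Decomposition.inductionOn ℬ with
      | zero => simp
      | homogeneous c => exact Submodule.subset_span (hSr s hs _ _ c.2)
      | add c c' h h' => rw [mul_add]; exact Submodule.add_mem _ h h'
    | zero => simp
    | add x y _ _ hx hy => rw [add_mul]; exact Submodule.add_mem _ hx hy
    | smul a x _ hx => rw [smul_mul_assoc]; exact Submodule.smul_mem _ _ hx
  let I : TwoSidedIdeal C := .mk' (Submodule.span R S) (Submodule.zero_mem _)
    (Submodule.add_mem _) (Submodule.neg_mem _) (mul_mem_left · _) (mul_mem_right · _)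
  have hmem (y : C) : y ∈ I ↔ y ∈ Submodule.span R S := TwoSidedIdeal.mem_mk' ..
  have hI : SetLike.IsHomogeneous ℬ I := fun i y hy =>
    (hmem _).2 <| Submodule.span_mono Set.inter_subset_left <|
      coe_decompose_mem_span_inter hS ((hmem y).1 hy) i
  rcases hC.eq_bot_or_eq_top I hI with hbot | htop
  · obtain ⟨s, hs, hs0⟩ := hS0
    have hsI : s ∈ I := (hmem s).2 (Submodule.subset_span hs)
    rw [hbot, TwoSidedIdeal.mem_bot] at hsI
    exact absurd hsI hs0
  · exact eq_top_iff.2 fun y _ => (hmem y).1 (htop ▸ TwoSidedIdeal.mem_top C)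

end GradedSimple

end Simplicity

theorem isOfFinOrder_of_forall_pow_mem {G F M : Type*} [LeftCancelMonoid G] [DecidableEq G]
    [Field F] [AddCommGroup M] [Module F M] [FiniteDimensional F M]
    {ℬ : G → Submodule F M} [Decomposition ℬ] {h : G} {x : ℕ → M}
    (hx : ∀ n, x n ∈ ℬ (h ^ n)) (hx0 : ∀ n, x n ≠ 0) : IsOfFinOrder h := by
  by_contra hh
  have hind := (Decomposition.isInternal ℬ).submodule_iSupIndep.comp
    (injective_pow_iff_not_isOfFinOrder.2 hh)
  exact Module.Finite.not_linearIndependent_of_infinite x (hind.linearIndependent _ hx hx0)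

theorem mulLeft_pow_apply_mem {G R A : Type*} [Monoid G] [CommSemiring R]
    [NonUnitalSemiring A] [Module R A] [SMulCommClass R A A] {ℬ : G → Submodule R A}
    (hmul : ∀ g h : G, ∀ x ∈ ℬ g, ∀ y ∈ ℬ h, x * y ∈ ℬ (g * h))
    {a x : A} {h g : G} (ha : a ∈ ℬ h) (hx : x ∈ ℬ g) (n : ℕ) :
    (LinearMap.mulLeft R a ^ n) x ∈ ℬ (h ^ n * g) := by
  induction n with
  | zero => simpa using hx
  | succ n ih =>
    rw [pow_succ' (LinearMap.mulLeft R a), Module.End.mul_apply, LinearMap.mulLeft_apply,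
      pow_succ', mul_assoc]
    exact hmul _ _ _ ha _ ih

theorem mul_eq_unit_comm {F A : Type*} [Field F] [NonUnitalRing A] [Module F A]
    [SMulCommClass F A A] [FiniteDimensional F A] {u a c : A}
    (hl : ∀ x, u * x = x) (hr : ∀ x, x * u = x) (h : a * c = u) : c * a = u := by
  have hsurj : Function.Surjective (LinearMap.mulLeft F a) := fun z =>
    ⟨c * z, by rw [LinearMap.mulLeft_apply, ← mul_assoc, h, hl]⟩
  apply LinearMap.injective_iff_surjective.2 hsurj
  rw [LinearMap.mulLeft_apply, LinearMap.mulLeft_apply, ← mul_assoc, h, hl, hr]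

section GradedDivision

variable {G F C : Type*} [Group G] [DecidableEq G] [Field F] [NonUnitalRing C] [Module F C]
  [SMulCommClass F C C] [IsScalarTower F C C] {ℬ : G → Submodule F C} [Decomposition ℬ]

namespace GradedSimple

theorem exists_mul_mul_eq (hmul : ∀ g h : G, ∀ x ∈ ℬ g, ∀ y ∈ ℬ h, x * y ∈ ℬ (g * h))
    (hC : GradedSimple ℬ) {u : C} (hu : ℬ 1 = F ∙ u) (hu0 : u ≠ 0)
    {x : C} {g : G} (hx : x ∈ ℬ g) (hx0 : x ≠ 0) :
    ∃ h k a b, a ∈ ℬ h ∧ b ∈ ℬ k ∧ h * g * k = 1 ∧ a * x * b = u := by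
  set S : Set C := {s | ∃ h k a b, a ∈ ℬ h ∧ b ∈ ℬ k ∧ a * x * b = s}
  have hS : ∀ s ∈ S, ∃ i, s ∈ ℬ i := by
    rintro _ ⟨h, k, a, b, ha, hb, rfl⟩
    exact ⟨_, hmul _ _ _ (hmul _ _ _ ha _ hx) _ hb⟩
  have hSl : ∀ s ∈ S, ∀ i, ∀ c ∈ ℬ i, c * s ∈ S := by
    rintro _ ⟨h, k, a, b, ha, hb, rfl⟩ i c hc
    exact ⟨_, _, _, _, hmul _ _ _ hc _ ha, hb, by simp only [mul_assoc]⟩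
  have hSr : ∀ s ∈ S, ∀ i, ∀ c ∈ ℬ i, s * c ∈ S := by
    rintro _ ⟨h, k, a, b, ha, hb, rfl⟩ i c hc
    exact ⟨_, _, _, _, ha, hmul _ _ _ hb _ hc, by simp only [mul_assoc]⟩
  have hS0 : ∃ s ∈ S, s ≠ 0 := by
    by_contra! h0
    refine hx0 (hC.eq_zero_of_forall_mul_eq_zero hmul fun k b hb => ?_)
    refine hC.eq_zero_of_forall_mul_eq_zero' hmul fun h a ha => ?_
    rw [← mul_assoc]
    exact h0 _ ⟨h, k, a, b, ha, hb, rfl⟩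
  have huS : u ∈ Submodule.span F S := hC.span_eq_top hS hSl hSr hS0 ▸ Submodule.mem_top
  have hu1 := coe_decompose_mem_span_inter hS huS 1
  rw [decompose_of_mem_same ℬ (hu ▸ Submodule.mem_span_singleton_self u)] at hu1
  obtain ⟨_, ⟨⟨h, k, a, b, ha, hb, rfl⟩, hs1⟩, hs0⟩ : ∃ s ∈ S ∩ ℬ 1, s ≠ 0 := by
    by_contra! h0
    rw [Submodule.span_eq_bot.2 h0, Submodule.mem_bot] at hu1
    exact hu0 hu1
  obtain ⟨μ, hμ⟩ := Submodule.mem_span_singleton.1 (hu ▸ hs1)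
  have hμ0 : μ ≠ 0 := by rintro rfl; exact hs0 (by rw [← hμ, zero_smul])
  refine ⟨h, k, μ⁻¹ • a, b, Submodule.smul_mem _ _ ha, hb,
    degree_eq_of_mem_mem ℬ (hmul _ _ _ (hmul _ _ _ ha _ hx) _ hb) hs1 hs0, ?_⟩
  rw [smul_mul_assoc, smul_mul_assoc, ← hμ, inv_smul_smul₀ hμ0]

theorem mul_self_ne_zero [FiniteDimensional F C]
    (hmul : ∀ g h : G, ∀ x ∈ ℬ g, ∀ y ∈ ℬ h, x * y ∈ ℬ (g * h))
    (hC : GradedSimple ℬ) {e : C} (he : ℬ 1 = F ∙ e) (he0 : e ≠ 0) : e * e ≠ 0 := by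
  intro hee
  have he1 : e ∈ ℬ 1 := he ▸ Submodule.mem_span_singleton_self e
  obtain ⟨h, k, a, b, ha, hb, -, habe⟩ := hC.exists_mul_mul_eq hmul he he0 he1 he0
  -- `C` has no powers of its own: `aⁿ z` is `(L ^ n) z`.
  set L := LinearMap.mulLeft F a
  have hpow (n : ℕ) : (LinearMap.mulRight F b ^ n) ((L ^ n) e) = e := by
    rw [← Module.End.mul_apply, ← (LinearMap.commute_mulLeft_right a b).symm.mul_pow n,
      Module.End.pow_apply]
    exact Function.iterate_fixed habe n
  have hfin : IsOfFinOrder h := isOfFinOrder_of_forall_pow_mem (x := fun n => (L ^ n) e)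
    (fun n => by simpa using mulLeft_pow_apply_mem hmul ha he1 n)
    (fun n h0 => he0 (by rw [← hpow n, h0, map_zero]))
  obtain ⟨n, hn, hhn⟩ := isOfFinOrder_iff_pow_eq_one.1 hfin
  obtain ⟨m, rfl⟩ : ∃ m, n = m + 1 := ⟨n - 1, by omega⟩
  have ham : (L ^ m) a ∈ ℬ 1 := by
    simpa [← pow_succ, hhn] using mulLeft_pow_apply_mem hmul ha ha m
  obtain ⟨β, hβ⟩ := Submodule.mem_span_singleton.1 (he ▸ ham)
  have hLe : (L ^ (m + 1)) e = 0 := calc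
    (L ^ (m + 1)) e = (L ^ m) (LinearMap.mulRight F e a) := by
      rw [pow_succ, Module.End.mul_apply]; rfl
    _ = (L ^ m) a * e := by
      rw [← Module.End.mul_apply, ((LinearMap.commute_mulLeft_right a e).pow_left m).eq]; rfl
    _ = 0 := by rw [← hβ, smul_mul_assoc, hee, smul_zero]
  exact he0 (by rw [← hpow (m + 1), hLe, map_zero])

theorem exists_idempotent [FiniteDimensional F C]
    (hmul : ∀ g h : G, ∀ x ∈ ℬ g, ∀ y ∈ ℬ h, x * y ∈ ℬ (g * h))
    (hC : GradedSimple ℬ) (hdim : Module.finrank F (ℬ 1) = 1) :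
    ∃ u : C, ℬ 1 = F ∙ u ∧ u ≠ 0 ∧ u * u = u := by
  obtain ⟨e, he1, he0⟩ := Submodule.exists_mem_ne_zero_of_ne_bot (p := ℬ 1) fun h => by
    rw [h, finrank_bot] at hdim
    exact zero_ne_one hdim
  have he : ℬ 1 = F ∙ e := (Submodule.eq_of_le_of_finrank_eq
    ((Submodule.span_singleton_le_iff_mem _ _).2 he1)
    (by rw [finrank_span_singleton he0, hdim])).symm
  have hee : e * e ∈ ℬ 1 := by simpa using hmul _ _ _ he1 _ he1
  obtain ⟨l, hl⟩ := Submodule.mem_span_singleton.1 (he ▸ hee)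
  have hl0 : l ≠ 0 := by
    rintro rfl
    exact hC.mul_self_ne_zero hmul he he0 (by rw [← hl, zero_smul])
  refine ⟨l⁻¹ • e, by rw [Submodule.span_singleton_smul_eq (inv_ne_zero hl0).isUnit, he],
    smul_ne_zero (inv_ne_zero hl0) he0, ?_⟩
  rw [smul_mul_assoc, mul_smul_comm, ← hl, smul_smul, smul_smul, inv_mul_cancel_right₀ hl0]

theorem eq_zero_of_mul_idempotent_eq_zero
    (hmul : ∀ g h : G, ∀ x ∈ ℬ g, ∀ y ∈ ℬ h, x * y ∈ ℬ (g * h))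
    (hC : GradedSimple ℬ) {u : C} (hu : ℬ 1 = F ∙ u) (hu0 : u ≠ 0) (huu : u * u = u)
    {y : C} {g : G} (hy : y ∈ ℬ g) (hyu : y * u = 0) : y = 0 := by
  by_contra hy0
  obtain ⟨h, k, a, b, ha, hb, hhgk, habu⟩ := hC.exists_mul_mul_eq hmul hu hu0 hy hy0
  have hkhg : k * h * g = 1 := by rw [mul_assoc]; exact mul_eq_one_comm.1 hhgk
  have hbay : b * a * y ∈ ℬ 1 := hkhg ▸ hmul _ _ _ (hmul _ _ _ hb _ ha) _ hy
  obtain ⟨δ, hδ⟩ := Submodule.mem_span_singleton.1 (hu ▸ hbay)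
  apply hu0
  calc u = (a * y * b) * (a * y * b) := by rw [habu, huu]
    _ = a * (y * (b * a * y)) * b := by simp only [mul_assoc]
    _ = 0 := by rw [← hδ, mul_smul_comm, hyu, smul_zero, mul_zero, zero_mul]

theorem eq_zero_of_idempotent_mul_eq_zero
    (hmul : ∀ g h : G, ∀ x ∈ ℬ g, ∀ y ∈ ℬ h, x * y ∈ ℬ (g * h))
    (hC : GradedSimple ℬ) {u : C} (hu : ℬ 1 = F ∙ u) (hu0 : u ≠ 0) (huu : u * u = u)
    {y : C} {g : G} (hy : y ∈ ℬ g) (huy : u * y = 0) : y = 0 := by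
  by_contra hy0
  obtain ⟨h, k, a, b, ha, hb, hhgk, habu⟩ := hC.exists_mul_mul_eq hmul hu hu0 hy hy0
  have hgkh : g * k * h = 1 := mul_eq_one_comm.1 (by rw [← mul_assoc]; exact hhgk)
  have hyba : y * b * a ∈ ℬ 1 := hgkh ▸ hmul _ _ _ (hmul _ _ _ hy _ hb) _ ha
  obtain ⟨δ, hδ⟩ := Submodule.mem_span_singleton.1 (hu ▸ hyba)
  apply hu0
  calc u = (a * y * b) * (a * y * b) := by rw [habu, huu]
    _ = a * ((y * b * a) * y) * b := by simp only [mul_assoc]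
    _ = 0 := by rw [← hδ, smul_mul_assoc, huy, smul_zero, mul_zero, zero_mul]

theorem mul_idempotent_eq_self (hmul : ∀ g h : G, ∀ x ∈ ℬ g, ∀ y ∈ ℬ h, x * y ∈ ℬ (g * h))
    (hC : GradedSimple ℬ) {u : C} (hu : ℬ 1 = F ∙ u) (hu0 : u ≠ 0) (huu : u * u = u)
    (x : C) : x * u = x := by
  have hu1 : u ∈ ℬ 1 := hu ▸ Submodule.mem_span_singleton_self u
  induction x using Decomposition.inductionOn ℬ with
  | zero => exact zero_mul u
  | @homogeneous i x =>
    have hxu : (x : C) * u ∈ ℬ i := by simpa using hmul _ _ _ x.2 _ hu1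
    refine (sub_eq_zero.1 (hC.eq_zero_of_mul_idempotent_eq_zero hmul hu hu0 huu
      (sub_mem x.2 hxu) ?_)).symm
    rw [sub_mul, mul_assoc, huu, sub_self]
  | add x x' hx hx' => rw [add_mul, hx, hx']

theorem idempotent_mul_eq_self (hmul : ∀ g h : G, ∀ x ∈ ℬ g, ∀ y ∈ ℬ h, x * y ∈ ℬ (g * h))
    (hC : GradedSimple ℬ) {u : C} (hu : ℬ 1 = F ∙ u) (hu0 : u ≠ 0) (huu : u * u = u)
    (x : C) : u * x = x := by
  have hu1 : u ∈ ℬ 1 := hu ▸ Submodule.mem_span_singleton_self u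
  induction x using Decomposition.inductionOn ℬ with
  | zero => exact mul_zero u
  | @homogeneous i x =>
    have hux : u * (x : C) ∈ ℬ i := by simpa using hmul _ _ _ hu1 _ x.2
    refine (sub_eq_zero.1 (hC.eq_zero_of_idempotent_mul_eq_zero hmul hu hu0 huu
      (sub_mem x.2 hux) ?_)).symm
    rw [mul_sub, ← mul_assoc, huu, sub_self]
  | add x x' hx hx' => rw [mul_add, hx, hx']

end GradedSimple

end GradedDivision

/-- A finite-dimensional graded simple algebra whose identity component is
one-dimensional is a graded division algebra: it has a unit and every nonzero
homogeneous element is invertible. -/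
theorem stmt_6 {G : Type*} [Group G] [DecidableEq G] {F : Type*} [Field F]
    {C : Type*} [NonUnitalRing C] [Module F C] [SMulCommClass F C C] [IsScalarTower F C C]
    [FiniteDimensional F C]
    (ℬ : G → Submodule F C) [DirectSum.Decomposition ℬ]
    (hmul : ∀ g h : G, ∀ x ∈ ℬ g, ∀ y ∈ ℬ h, x * y ∈ ℬ (g * h))
    -- `C` is graded simple:
    (hC2 : ∃ x y : C, x * y ≠ 0)
    (hsimple : ∀ I : TwoSidedIdeal C,
      (∀ x ∈ I, ∀ g : G, ((DirectSum.decompose ℬ x) g : C) ∈ I) → I = ⊥ ∨ I = ⊤)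
    -- the identity component is one-dimensional:
    (hdim : Module.finrank F (ℬ (1 : G)) = 1) :
    ∃ u : C, (∀ x : C, u * x = x ∧ x * u = x) ∧
      ∀ g : G, ∀ x ∈ ℬ g, x ≠ 0 → ∃ y : C, x * y = u ∧ y * x = u := by
  have hC : GradedSimple ℬ := ⟨hC2, fun I hI => hsimple I fun x hx g => hI g hx⟩
  obtain ⟨u, hu, hu0, huu⟩ := hC.exists_idempotent hmul hdim
  have hl := hC.idempotent_mul_eq_self hmul hu hu0 huu
  have hr := hC.mul_idempotent_eq_self hmul hu hu0 huu
  refine ⟨u, fun x => ⟨hl x, hr x⟩, fun g x hx hx0 => ?_⟩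
  obtain ⟨h, k, a, b, ha, hb, -, habx⟩ := hC.exists_mul_mul_eq hmul hu hu0 hx hx0
  refine ⟨b * a, ?_, ?_⟩
  · rw [← mul_assoc]
    exact mul_eq_unit_comm (F := F) hl hr (by rwa [mul_assoc] at habx)
  · rw [mul_assoc]
    exact mul_eq_unit_comm (F := F) hl hr habx
end

section
/- Let R be a finite-dimensional G-graded simple algebra over an arbitrary field. Then the identity component R_e is semiprimitive (its Jacobson radical is zero). -/
/-!
Work in the unitization `A = F ⊕ R`, graded by `A_g = R_g` for `g ≠ 1` and `A_1 = F ⊕ R_1`; its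
subspaces form a semiring under products. For a quasi-regular ideal `I` of `R_1`, every `1 + x`
with `x ∈ I` has a left inverse in the finite-dimensional algebra `A_1`, so the left ideal `I` of
`A_1` lies in its Jacobson radical and is nilpotent by Nakayama. The ideal of `R` generated by `I`
is `⨆ g h, A_g I A_h`, which is graded; by graded simplicity it is `0`, giving `I = 0`, or all of
`R`. In the latter case `R_1` lies in the finite sum of the ideals `A_g I A_g⁻¹` of `A_1`, each
nilpotent because `A_g⁻¹ A_g ⊆ A_1`, so `R_1` is nilpotent. A pigeonhole argument on the degrees
of the prefixes of long products then makes `R` nilpotent, whereas graded simplicity and `R² ≠ 0`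
force `R² = R ≠ 0`.
-/

open Unitization

theorem List.scanl_eq_cons_tail {α β : Type*} (f : β → α → β) (b : β) (l : List α) :
    l.scanl f b = b :: (l.scanl f b).tail := by
  cases l <;> simp [List.scanl_cons]

namespace Submodule

section IdealsOfSubrings

variable {F A : Type*} [CommSemiring F] [Semiring A] [Algebra F A]

def IsIdealOf (N U : Submodule F A) : Prop :=
  N ≤ U ∧ U * N ≤ N ∧ N * U ≤ N

theorem IsIdealOf.sup {M N U : Submodule F A} (hM : M.IsIdealOf U) (hN : N.IsIdealOf U) :
    (M ⊔ N).IsIdealOf U :=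
  ⟨sup_le hM.1 hN.1, (mul_sup _ _ _).trans_le (sup_le_sup hM.2.1 hN.2.1),
    (sup_mul _ _ _).trans_le (sup_le_sup hM.2.2 hN.2.2)⟩

theorem isNilpotent_of_le {M N : Submodule F A} (h : M ≤ N) (hN : IsNilpotent N) :
    IsNilpotent M :=
  let ⟨n, hn⟩ := hN
  ⟨n, le_bot_iff.mp ((pow_le_pow_left' h n).trans_eq hn)⟩

theorem pow_mul_le_of_mul_le {X Y : Submodule F A} (h : X * Y ≤ Y) : ∀ n : ℕ, X ^ n * Y ≤ Y
  | 0 => by rw [pow_zero, one_mul]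
  | n + 1 => by
    rw [pow_succ, mul_assoc]
    exact (mul_le_mul' le_rfl h).trans (pow_mul_le_of_mul_le h n)

theorem sup_pow_le {X Y : Submodule F A} (hXY : X * Y ≤ Y) (hYX : Y * X ≤ Y)
    (hY : Y * Y ≤ Y) : ∀ n : ℕ, (X ⊔ Y) ^ n ≤ X ^ n ⊔ Y
  | 0 => by rw [pow_zero, pow_zero]; exact le_sup_left
  | n + 1 => by
    rw [pow_succ, pow_succ]
    calc (X ⊔ Y) ^ n * (X ⊔ Y) ≤ (X ^ n ⊔ Y) * (X ⊔ Y) :=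
          mul_le_mul' (sup_pow_le hXY hYX hY n) le_rfl
      _ = X ^ n * X ⊔ (X ^ n * Y ⊔ (Y * X ⊔ Y * Y)) := by
          rw [sup_mul, mul_sup, mul_sup, sup_assoc]
      _ ≤ X ^ n * X ⊔ Y :=
          sup_le_sup_left (sup_le (pow_mul_le_of_mul_le hXY n) (sup_le hYX hY)) _

theorem IsIdealOf.isNilpotent_sup {M N U : Submodule F A} (hM : M.IsIdealOf U)
    (hN : N.IsIdealOf U) (hMn : IsNilpotent M) (hNn : IsNilpotent N) : IsNilpotent (M ⊔ N) := by
  obtain ⟨a, ha⟩ := hMn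
  obtain ⟨b, hb⟩ := hNn
  have hMN : M * N ≤ N := (mul_le_mul' hM.1 le_rfl).trans hN.2.1
  have hNM : N * M ≤ N := (mul_le_mul' le_rfl hM.1).trans hN.2.2
  have hNN : N * N ≤ N := (mul_le_mul' hN.1 le_rfl).trans hN.2.1
  refine ⟨a * b, le_bot_iff.mp ?_⟩
  calc (M ⊔ N) ^ (a * b) = ((M ⊔ N) ^ a) ^ b := pow_mul _ _ _
    _ ≤ (M ^ a ⊔ N) ^ b := pow_le_pow_left' (sup_pow_le hMN hNM hNN a) b
    _ = ⊥ := by rw [ha, zero_eq_bot, bot_sup_eq, hb, zero_eq_bot]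

theorem isNilpotent_iSup {ι : Type*} {U : Submodule F A} {N : ι → Submodule F A}
    (hfin : {i | N i ≠ ⊥}.Finite) (hN : ∀ i, (N i).IsIdealOf U ∧ IsNilpotent (N i)) :
    IsNilpotent (⨆ i, N i) := by
  have hsup : ⨆ i, N i = hfin.toFinset.sup N := by
    rw [Finset.sup_eq_iSup]
    refine le_antisymm (iSup_le fun i => ?_) (iSup₂_le fun i _ => le_iSup N i)
    by_cases hi : N i = ⊥
    · exact hi.trans_le bot_le
    · exact le_iSup₂_of_le i (hfin.mem_toFinset.mpr hi) le_rfl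
  rw [hsup]
  refine (Finset.sup_induction (p := fun M => M.IsIdealOf U ∧ IsNilpotent M) ?_ ?_
    fun i _ => hN i).2
  · exact ⟨⟨bot_le, by rw [mul_bot], by rw [bot_mul]⟩, ⟨1, by rw [pow_one, zero_eq_bot]⟩⟩
  · exact fun _ hM _ hN => ⟨hM.1.sup hN.1, hM.1.isNilpotent_sup hN.1 hM.2 hN.2⟩

theorem mul_mul_pow_succ_le {X N Y U : Submodule F A} (hYX : Y * X ≤ U) (hUN : U * N ≤ N) :
    ∀ n : ℕ, (X * N * Y) ^ (n + 1) ≤ X * N ^ (n + 1) * Y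
  | 0 => by rw [pow_one, pow_one]
  | n + 1 => by
    calc (X * N * Y) ^ (n + 1 + 1) = (X * N * Y) ^ (n + 1) * (X * N * Y) := pow_succ _ _
      _ ≤ X * N ^ (n + 1) * Y * (X * N * Y) :=
          mul_le_mul' (mul_mul_pow_succ_le hYX hUN n) le_rfl
      _ = X * N ^ (n + 1) * ((Y * X) * N) * Y := by simp only [mul_assoc]
      _ ≤ X * N ^ (n + 1) * (U * N) * Y := by gcongr
      _ ≤ X * N ^ (n + 1) * N * Y := by gcongr
      _ = X * N ^ (n + 1 + 1) * Y := by rw [mul_assoc X, ← pow_succ]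

theorem IsNilpotent.mul_mul {X N Y U : Submodule F A} (hYX : Y * X ≤ U) (hUN : U * N ≤ N)
    (hN : IsNilpotent N) : IsNilpotent (X * N * Y) := by
  obtain ⟨n, hn⟩ := hN
  refine ⟨n + 1, le_bot_iff.mp ?_⟩
  calc (X * N * Y) ^ (n + 1) ≤ X * N ^ (n + 1) * Y := mul_mul_pow_succ_le hYX hUN n
    _ = ⊥ := by rw [pow_succ, hn, zero_eq_bot, bot_mul, mul_bot, bot_mul]

end IdealsOfSubrings

section Nakayama

variable {F A : Type*} [CommRing F] [Ring A] [Algebra F A]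

theorem mem_jacobson_of_quasiregular {U : Subalgebra F A} {N : Submodule F A}
    (hUN : Subalgebra.toSubmodule U * N ≤ N)
    (hinv : ∀ x ∈ N, ∃ y ∈ U, y * (1 + x) = 1) {x : U} (hx : (x : A) ∈ N) :
    x ∈ Ring.jacobson U := by
  rw [← Ideal.jacobson_bot, Ideal.mem_jacobson_iff]
  intro y
  obtain ⟨z, hz, hzy⟩ := hinv (y * x) (hUN (mul_mem_mul y.2 hx))
  refine ⟨⟨z, hz⟩, (Submodule.mem_bot U).mpr (Subtype.ext ?_)⟩
  simp only [Subalgebra.coe_sub, Subalgebra.coe_add, Subalgebra.coe_mul, Subalgebra.coe_one,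
    ZeroMemClass.coe_zero]
  rw [← hzy]
  noncomm_ring

/-- Nakayama: the powers of `N` stabilise at some `K` with `K = N * K`, and `N` lies in the
Jacobson radical of `U`. -/
theorem isNilpotent_of_quasiregular [IsArtinian F A] [IsNoetherian F A] {U : Subalgebra F A}
    {N : Submodule F A} (hNU : N ≤ Subalgebra.toSubmodule U)
    (hUN : Subalgebra.toSubmodule U * N ≤ N)
    (hinv : ∀ x ∈ N, ∃ y ∈ U, y * (1 + x) = 1) : IsNilpotent N := by
  have hNN : N * N ≤ N := (mul_le_mul' hNU le_rfl).trans hUN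
  have hanti : Antitone fun n : ℕ => N ^ (n + 1) := antitone_nat_of_succ_le fun n => by
    rw [pow_succ _ (n + 1), pow_succ, mul_assoc]
    exact mul_le_mul' le_rfl hNN
  obtain ⟨n, hn⟩ :=
    IsArtinian.monotone_stabilizes ⟨fun n => OrderDual.toDual (N ^ (n + 1)), hanti⟩
  set K := N ^ (n + 1) with hK
  have hNK : N * K = K := by
    rw [hK, ← pow_succ']
    exact (hn (n + 1) n.le_succ).symm
  have hUK : Subalgebra.toSubmodule U * K ≤ K := by
    rw [← hNK, ← mul_assoc]
    exact mul_le_mul' hUN le_rfl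
  let K' : Submodule U A := { K with smul_mem' := fun u _ hk => hUK (mul_mem_mul u.2 hk) }
  have hK' : K' = ⊥ := by
    refine FG.eq_bot_of_le_jacobson_smul (FG.of_restrictScalars F (IsNoetherian.noetherian K)) ?_
    intro k hk
    change k ∈ K at hk
    rw [← hNK] at hk
    refine Submodule.mul_induction_on hk (fun x hx y hy => ?_) (fun _ _ => add_mem)
    exact smul_mem_smul (r := (⟨x, hNU hx⟩ : U)) (mem_jacobson_of_quasiregular hUN hinv hx) hy
  refine ⟨n + 1, ?_⟩
  have := congrArg (restrictScalars F) hK'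
  rwa [restrictScalars_bot] at this

end Nakayama

section GradedFamily

variable {F A : Type*} [CommSemiring F] [Semiring A] [Algebra F A]

theorem iSup_pow_le_iSup_prod {ι : Type*} (B : ι → Submodule F A) :
    ∀ n : ℕ, (⨆ i, B i) ^ n ≤ ⨆ (l : List ι) (_ : l.length = n), (l.map B).prod
  | 0 => le_iSup₂_of_le [] rfl (by simp)
  | n + 1 => by
    rw [pow_succ, mul_iSup]
    refine iSup_le fun i => (mul_le_mul' (iSup_pow_le_iSup_prod B n) le_rfl).trans ?_
    rw [iSup_mul]
    refine iSup_le fun l => ?_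
    rw [iSup_mul]
    exact iSup_le fun hl => le_iSup₂_of_le (l ++ [i]) (by simp [hl]) (by simp)

variable {G : Type*} [Group G] {B : G → Submodule F A} (hB : ∀ g h, B g * B h ≤ B (g * h))
include hB

theorem prod_map_le_of_ne_nil : ∀ {l : List G}, l ≠ [] → (l.map B).prod ≤ B l.prod
  | [], h => absurd rfl h
  | [g], _ => by simp
  | g :: h :: l, _ => by
    rw [List.map_cons, List.prod_cons, List.prod_cons]
    exact (mul_le_mul' le_rfl (prod_map_le_of_ne_nil (List.cons_ne_nil h l))).trans (hB _ _)

variable [DecidableEq G]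

/-- `(l.scanl (· * ·) a).tail` lists the degrees `a * l₀ * ⋯ * lᵢ` of the nonempty prefixes of
`l`, read from degree `a`. Reading `p ++ l` from degree `q`, the prefix up to the first return to
degree `t` lies in `B (q⁻¹ * t)`, and each later return closes a nonempty segment of degree `1`. -/
theorem prod_map_append_le_of_lt_count (t : G) :
    ∀ (l p : List G) (q : G) (r : ℕ), r < ((l.scanl (· * ·) (q * p.prod)).tail).count t →
      ((p ++ l).map B).prod ≤ B (q⁻¹ * t) * B 1 ^ r * ⊤
  | [], _, _, _, h => by simp at h
  | g :: l, p, q, r, h => by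
    rw [List.scanl_cons, List.tail_cons, List.scanl_eq_cons_tail, List.count_cons] at h
    have hsplit : ((p ++ g :: l).map B).prod = ((p ++ [g]).map B).prod * (l.map B).prod := by
      simp [List.prod_append, mul_assoc]
    have hprod : q * (p ++ [g]).prod = q * p.prod * g := by simp [mul_assoc]
    by_cases hret : q * p.prod * g = t
    · have hseg : ((p ++ [g]).map B).prod ≤ B (q⁻¹ * t) := by
        refine (prod_map_le_of_ne_nil hB (by simp)).trans_eq ?_
        rw [← hret, ← hprod, inv_mul_cancel_left]
      rw [hsplit]
      rcases r with _ | r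
      · simpa using mul_le_mul' hseg le_top
      · have hl := prod_map_append_le_of_lt_count t l [] t r (by simpa [hret] using h)
        rw [List.nil_append, inv_mul_cancel] at hl
        calc _ ≤ B (q⁻¹ * t) * (B 1 * B 1 ^ r * ⊤) := mul_le_mul' hseg hl
          _ = _ := by rw [pow_succ', mul_assoc, mul_assoc, mul_assoc]
    · simp only [beq_iff_eq, hret, if_false, add_zero] at h
      rw [List.append_cons]
      exact prod_map_append_le_of_lt_count t l (p ++ [g]) q r (by rwa [hprod])

/-- A word of length `|S| * N + 1` has `|S| * N + 1` nonempty prefixes; by pigeonhole some degree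
`t` is hit `N + 1` times, which splits the product into `B t * B 1 ^ N * ⊤`. -/
theorem isNilpotent_iSup_of_isNilpotent_one (hfin : {g | B g ≠ ⊥}.Finite)
    (h1 : IsNilpotent (B 1)) : IsNilpotent (⨆ g, B g) := by
  obtain ⟨N, hN⟩ := h1
  set S := hfin.toFinset
  refine ⟨S.card * N + 1, le_bot_iff.mp ((iSup_pow_le_iSup_prod B _).trans ?_)⟩
  refine iSup₂_le fun l hl => le_bot_iff.mpr ?_
  set L := (l.scanl (· * ·) 1).tail
  have hbot : ∀ t r, r < L.count t → B t * B 1 ^ r = ⊥ → (l.map B).prod = ⊥ := by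
    intro t r hr hzero
    have := prod_map_append_le_of_lt_count hB t l [] 1 r (by simpa using hr)
    rw [List.nil_append, inv_one, one_mul, hzero, bot_mul] at this
    exact le_bot_iff.mp this
  by_cases hS : ∀ x ∈ L, x ∈ S
  · have hcount : ∑ t ∈ S, L.count t = L.length := by
      simpa using Multiset.sum_count_eq_card (s := S) (m := (L : Multiset G)) (by simpa using hS)
    have hsum : ∑ _t ∈ S, N < ∑ t ∈ S, L.count t := by
      rw [hcount, Finset.sum_const, smul_eq_mul, List.length_tail, List.length_scanl, hl]
      omega
    obtain ⟨t, -, ht⟩ := Finset.exists_lt_of_sum_lt hsum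
    exact hbot t N ht (by rw [hN, zero_eq_bot, mul_bot])
  · push Not at hS
    obtain ⟨x, hx, hxS⟩ := hS
    refine hbot x 0 (List.count_pos_iff.mpr hx) ?_
    rw [pow_zero, mul_one]
    simpa [S] using hxS

end GradedFamily

end Submodule

instance Unitization.instModuleFinite {S R A : Type*} [Semiring S] [AddCommMonoid R]
    [AddCommMonoid A] [Module S R] [Module S A] [Module.Finite S R] [Module.Finite S A] :
    Module.Finite S (Unitization R A) :=
  Module.Finite.equiv (Unitization.linearEquiv S R A).symm

section UnitizationGrading

variable {F R : Type*} [CommRing F] [NonUnitalRing R] [Module F R] {G : Type*}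
  (ℬ : G → Submodule F R)

def inrGrading (g : G) : Submodule F (Unitization F R) :=
  (ℬ g).map (inrHom F F R)

variable {ℬ}

section Decomposition

variable [DecidableEq G] [DirectSum.Decomposition ℬ]

theorem iSup_inrGrading : ⨆ g, inrGrading ℬ g = LinearMap.range (inrHom F F R) := by
  rw [LinearMap.range_eq_map, ← (DirectSum.Decomposition.isInternal ℬ).submodule_iSup_eq_top,
    Submodule.map_iSup]
  rfl

theorem finite_inrGrading_ne_bot [IsNoetherian F R] : {g | inrGrading ℬ g ≠ ⊥}.Finite :=
  (Submodule.finite_ne_bot_of_iSupIndep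
    (DirectSum.Decomposition.isInternal ℬ).submodule_iSupIndep).subset
    fun g hg hbot => hg (by rw [inrGrading, hbot, Submodule.map_bot])

theorem inr_decompose_mem_iSup {ι : Type*} {P : ι → Submodule F (Unitization F R)} {d : ι → G}
    (hP : ∀ i, P i ≤ inrGrading ℬ (d i)) {x : R} (hx : (x : Unitization F R) ∈ ⨆ i, P i)
    (g : G) :
    ((DirectSum.decompose ℬ x g : R) : Unitization F R) ∈ ⨆ (i) (_ : d i = g), P i := by
  let π := inrHom F F R ∘ₗ (ℬ g).subtype ∘ₗ DirectSum.component F G (fun i => ℬ i) g ∘ₗ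
    (DirectSum.decomposeLinearEquiv ℬ).toLinearMap ∘ₗ sndHom F F R
  have hπ (y : R) : π (inrHom F F R y) = inrHom F F R (DirectSum.decompose ℬ y g) := rfl
  have hle : (⨆ i, P i).map π ≤ ⨆ (i) (_ : d i = g), P i := by
    rw [Submodule.map_iSup]
    refine iSup_le fun i => ?_
    rintro _ ⟨a, ha, rfl⟩
    obtain ⟨y, hy, rfl⟩ := hP i ha
    by_cases hdi : d i = g
    · subst hdi
      rw [hπ, DirectSum.decompose_of_mem_same ℬ hy]
      exact Submodule.mem_iSup_of_mem i (Submodule.mem_iSup_of_mem rfl ha)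
    · rw [hπ, DirectSum.decompose_of_mem_ne ℬ hy hdi]
      exact zero_mem _
  exact hle ⟨_, hx, rfl⟩

variable [SMulCommClass F R R] [IsScalarTower F R R]

theorem eq_bot_or_range_le_of_isHomogeneous
    (hsimple : ∀ J : TwoSidedIdeal R,
      (∀ x ∈ J, ∀ g : G, ((DirectSum.decompose ℬ x) g : R) ∈ J) → J = ⊥ ∨ J = ⊤)
    {ι : Type*} {P : ι → Submodule F (Unitization F R)} {d : ι → G}
    (hP : ∀ i, P i ≤ inrGrading ℬ (d i))
    (hleft : ∀ k i, ∃ j, inrGrading ℬ k * P i ≤ P j)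
    (hright : ∀ k i, ∃ j, P i * inrGrading ℬ k ≤ P j) :
    ⨆ i, P i = ⊥ ∨ LinearMap.range (inrHom F F R) ≤ ⨆ i, P i := by
  set K := ⨆ i, P i
  have hK : K ≤ LinearMap.range (inrHom F F R) :=
    iSup_le fun i => (hP i).trans LinearMap.map_le_range
  have hmulK : LinearMap.range (inrHom F F R) * K ≤ K := by
    rw [← iSup_inrGrading (ℬ := ℬ), Submodule.iSup_mul]
    refine iSup_le fun k => ?_
    rw [Submodule.mul_iSup]
    exact iSup_le fun i => (hleft k i).choose_spec.trans (le_iSup P _)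
  have hKmul : K * LinearMap.range (inrHom F F R) ≤ K := by
    rw [← iSup_inrGrading (ℬ := ℬ), Submodule.mul_iSup]
    refine iSup_le fun k => ?_
    rw [Submodule.iSup_mul]
    exact iSup_le fun i => (hright k i).choose_spec.trans (le_iSup P _)
  let J : TwoSidedIdeal R := .mk' {x | (x : Unitization F R) ∈ K}
    (by simp) (fun hx hy => by simpa using K.add_mem hx hy)
    (fun hx => by simpa using K.neg_mem hx)
    (fun {x y} hy => by simpa using hmulK (Submodule.mul_mem_mul ⟨x, rfl⟩ hy))
    (fun {x y} hx => by simpa using hKmul (Submodule.mul_mem_mul hx ⟨y, rfl⟩))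
  have hJ : ∀ x, x ∈ J ↔ (x : Unitization F R) ∈ K := TwoSidedIdeal.mem_mk' _ _ _ _ _ _
  have hgraded : ∀ x ∈ J, ∀ g : G, ((DirectSum.decompose ℬ x) g : R) ∈ J := fun x hx g =>
    (hJ _).mpr ((iSup₂_le fun i _ => le_iSup P i) (inr_decompose_mem_iSup hP ((hJ x).mp hx) g))
  rcases hsimple J hgraded with h | h
  · refine Or.inl (eq_bot_iff.mpr fun a ha => ?_)
    obtain ⟨x, rfl⟩ := hK ha
    have hx : x ∈ J := (hJ x).mpr ha
    rw [h, TwoSidedIdeal.mem_bot] at hx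
    simp [hx]
  · exact Or.inr fun _ ⟨x, hx⟩ => hx ▸ (hJ x).mp (h ▸ TwoSidedIdeal.mem_top R)

end Decomposition

end UnitizationGrading

section UnitGrading

variable {F R : Type*} [CommRing F] [NonUnitalRing R] [Module F R] [SMulCommClass F R R]
  [IsScalarTower F R R] {G : Type*} [Group G] (ℬ : G → Submodule F R)

/-- The grading `A_g` of the unitization `A = F ⊕ R`: the scalars are put in degree `1`. -/
def unitGrading (g : G) : Submodule F (Unitization F R) :=
  inrGrading ℬ g ⊔ ⨆ _ : g = 1, 1

variable {ℬ}

theorem inrGrading_le_unitGrading (g : G) : inrGrading ℬ g ≤ unitGrading ℬ g :=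
  le_sup_left

theorem one_le_unitGrading_one : (1 : Submodule F (Unitization F R)) ≤ unitGrading ℬ 1 :=
  le_sup_of_le_right (le_iSup_of_le rfl le_rfl)

theorem unitGrading_one_mul_le {M : Submodule F (Unitization F R)}
    (h : inrGrading ℬ 1 * M ≤ M) : unitGrading ℬ 1 * M ≤ M := by
  rw [unitGrading, Submodule.sup_mul, Submodule.iSup_mul]
  exact sup_le h (iSup_le fun _ => (one_mul M).le)

theorem unitGrading_one_mul_map_le {I : Submodule F R}
    (hI : ∀ a ∈ ℬ 1, ∀ x ∈ I, a * x ∈ I) :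
    unitGrading ℬ 1 * I.map (inrHom F F R) ≤ I.map (inrHom F F R) := by
  refine unitGrading_one_mul_le (Submodule.mul_le.mpr ?_)
  rintro _ ⟨a, ha, rfl⟩ _ ⟨x, hx, rfl⟩
  exact ⟨a * x, hI a ha x hx, inr_mul F a x⟩

variable (hmul : ∀ g h : G, ∀ x ∈ ℬ g, ∀ y ∈ ℬ h, x * y ∈ ℬ (g * h))
include hmul

theorem inrGrading_mul_le (g h : G) :
    inrGrading ℬ g * inrGrading ℬ h ≤ inrGrading ℬ (g * h) := by
  refine Submodule.mul_le.mpr ?_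
  rintro _ ⟨x, hx, rfl⟩ _ ⟨y, hy, rfl⟩
  exact ⟨x * y, hmul g h x hx y hy, inr_mul F x y⟩

theorem unitGrading_mul_inrGrading_le (g h : G) :
    unitGrading ℬ g * inrGrading ℬ h ≤ inrGrading ℬ (g * h) := by
  rw [unitGrading, Submodule.sup_mul, Submodule.iSup_mul]
  refine sup_le (inrGrading_mul_le hmul g h) (iSup_le fun hg => ?_)
  rw [hg, one_mul, one_mul]

theorem inrGrading_mul_unitGrading_le (g h : G) :
    inrGrading ℬ g * unitGrading ℬ h ≤ inrGrading ℬ (g * h) := by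
  rw [unitGrading, Submodule.mul_sup, Submodule.mul_iSup]
  refine sup_le (inrGrading_mul_le hmul g h) (iSup_le fun hh => ?_)
  rw [hh, mul_one, mul_one]

theorem unitGrading_mul_le (g h : G) :
    unitGrading ℬ g * unitGrading ℬ h ≤ unitGrading ℬ (g * h) := by
  rw [unitGrading, Submodule.sup_mul, Submodule.iSup_mul]
  refine sup_le ((inrGrading_mul_unitGrading_le hmul g h).trans (inrGrading_le_unitGrading _))
    (iSup_le fun hg => ?_)
  rw [hg, one_mul, one_mul]

theorem unitGrading_mul_mul_le {M : Submodule F (Unitization F R)} (hM : M ≤ inrGrading ℬ 1)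
    (g h : G) : unitGrading ℬ g * M * unitGrading ℬ h ≤ inrGrading ℬ (g * h) :=
  calc unitGrading ℬ g * M * unitGrading ℬ h
      ≤ unitGrading ℬ g * inrGrading ℬ 1 * unitGrading ℬ h := by gcongr
    _ ≤ inrGrading ℬ (g * 1) * unitGrading ℬ h := by
      gcongr; exact unitGrading_mul_inrGrading_le hmul g 1
    _ ≤ inrGrading ℬ (g * 1 * h) := inrGrading_mul_unitGrading_le hmul _ h
    _ = inrGrading ℬ (g * h) := by rw [mul_one]

end UnitGrading

section Quasiregular

variable {F R : Type*} [Field F] [NonUnitalRing R] [Module F R] [SMulCommClass F R R]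
  [IsScalarTower F R R] [FiniteDimensional F R] {G : Type*} [Group G] {ℬ : G → Submodule F R}

theorem isNilpotent_map_of_quasiregular
    (hmul : ∀ g h : G, ∀ x ∈ ℬ g, ∀ y ∈ ℬ h, x * y ∈ ℬ (g * h)) {I : Submodule F R}
    (hIle : I ≤ ℬ 1) (hI : ∀ a ∈ ℬ 1, ∀ x ∈ I, a * x ∈ I)
    (hqr : ∀ x ∈ I, ∃ y ∈ ℬ 1, x + y + y * x = 0) : IsNilpotent (I.map (inrHom F F R)) := by
  let U : Subalgebra F (Unitization F R) := (unitGrading ℬ 1).toSubalgebra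
    (Submodule.one_le.mp one_le_unitGrading_one)
    fun x y hx hy => by simpa using unitGrading_mul_le hmul 1 1 (Submodule.mul_mem_mul hx hy)
  refine Submodule.isNilpotent_of_quasiregular (U := U)
    ((Submodule.map_mono hIle).trans (inrGrading_le_unitGrading 1))
    (unitGrading_one_mul_map_le hI) ?_
  rintro _ ⟨x, hx, rfl⟩
  obtain ⟨y, hy, hyx⟩ := hqr x hx
  refine ⟨1 + y, add_mem U.one_mem (inrGrading_le_unitGrading 1 ⟨y, hy, rfl⟩), ?_⟩
  calc (1 + (y : Unitization F R)) * (1 + x) = 1 + ↑(x + y + y * x) := by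
        simp only [inr_add, inr_mul]; noncomm_ring
    _ = 1 := by rw [hyx, inr_zero, add_zero]

end Quasiregular

section GradedSimple

variable {F R : Type*} [CommRing F] [NonUnitalRing R] [Module F R] [SMulCommClass F R R]
  [IsScalarTower F R R] {G : Type*} [Group G] [DecidableEq G] {ℬ : G → Submodule F R}
  [DirectSum.Decomposition ℬ] (hmul : ∀ g h : G, ∀ x ∈ ℬ g, ∀ y ∈ ℬ h, x * y ∈ ℬ (g * h))
include hmul

theorem isNilpotent_iSup_unitGrading_mul_mul [IsNoetherian F R]
    {M : Submodule F (Unitization F R)} (hM : M ≤ inrGrading ℬ 1)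
    (hUM : unitGrading ℬ 1 * M ≤ M) (hMnil : IsNilpotent M) :
    IsNilpotent (⨆ g, unitGrading ℬ g * M * unitGrading ℬ g⁻¹) := by
  refine Submodule.isNilpotent_iSup (U := unitGrading ℬ 1) ?_ fun g => ⟨⟨?_, ?_, ?_⟩, ?_⟩
  · refine ((finite_inrGrading_ne_bot (ℬ := ℬ)).insert 1).subset fun g hg => ?_
    by_contra hmem
    simp only [Set.mem_insert_iff, Set.mem_ofPred_eq, not_or, not_not] at hmem
    refine hg ?_
    rw [unitGrading, hmem.2, iSup_neg hmem.1, bot_sup_eq, Submodule.bot_mul, Submodule.bot_mul]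
  · refine (unitGrading_mul_mul_le hmul hM g g⁻¹).trans ?_
    rw [mul_inv_cancel]
    exact inrGrading_le_unitGrading 1
  · rw [← mul_assoc, ← mul_assoc]
    gcongr
    exact (unitGrading_mul_le hmul 1 g).trans_eq (by rw [one_mul])
  · rw [mul_assoc _ (unitGrading ℬ g⁻¹)]
    gcongr
    exact (unitGrading_mul_le hmul g⁻¹ 1).trans_eq (by rw [mul_one])
  · exact Submodule.IsNilpotent.mul_mul
      ((unitGrading_mul_le hmul g⁻¹ g).trans_eq (by rw [inv_mul_cancel])) hUM hMnil

variable (hsimple : ∀ J : TwoSidedIdeal R,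
  (∀ x ∈ J, ∀ g : G, ((DirectSum.decompose ℬ x) g : R) ∈ J) → J = ⊥ ∨ J = ⊤)
include hsimple

theorem eq_bot_or_isNilpotent_inrGrading_one [IsNoetherian F R]
    {M : Submodule F (Unitization F R)} (hM : M ≤ inrGrading ℬ 1)
    (hUM : unitGrading ℬ 1 * M ≤ M) (hMnil : IsNilpotent M) :
    M = ⊥ ∨ IsNilpotent (inrGrading ℬ 1) := by
  set P := fun gh : G × G => unitGrading ℬ gh.1 * M * unitGrading ℬ gh.2
  have hP (gh : G × G) : P gh ≤ inrGrading ℬ (gh.1 * gh.2) :=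
    unitGrading_mul_mul_le hmul hM gh.1 gh.2
  have hleft (k : G) (gh : G × G) : ∃ j, inrGrading ℬ k * P gh ≤ P j := by
    refine ⟨(k * gh.1, gh.2), ?_⟩
    simp only [P, ← mul_assoc]
    gcongr
    exact (inrGrading_mul_unitGrading_le hmul k gh.1).trans (inrGrading_le_unitGrading _)
  have hright (k : G) (gh : G × G) : ∃ j, P gh * inrGrading ℬ k ≤ P j := by
    refine ⟨(gh.1, gh.2 * k), ?_⟩
    simp only [P, mul_assoc]
    gcongr
    exact (unitGrading_mul_inrGrading_le hmul gh.2 k).trans (inrGrading_le_unitGrading _)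
  rcases eq_bot_or_range_le_of_isHomogeneous hsimple hP hleft hright with h | h
  · refine Or.inl (le_bot_iff.mp ?_)
    calc M = 1 * M * 1 := by rw [one_mul, mul_one]
      _ ≤ P (1, 1) :=
          mul_le_mul' (mul_le_mul' one_le_unitGrading_one le_rfl) one_le_unitGrading_one
      _ ≤ ⨆ gh, P gh := le_iSup P (1, 1)
      _ = ⊥ := h
  · have hdeg : ⨆ (gh : G × G) (_ : gh.1 * gh.2 = 1), P gh ≤
        ⨆ g, unitGrading ℬ g * M * unitGrading ℬ g⁻¹ := iSup₂_le fun gh hgh => by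
      simp only [P, eq_inv_of_mul_eq_one_right hgh]
      exact le_iSup (fun g => unitGrading ℬ g * M * unitGrading ℬ g⁻¹) gh.1
    refine Or.inr (Submodule.isNilpotent_of_le ?_
      (isNilpotent_iSup_unitGrading_mul_mul hmul hM hUM hMnil))
    rintro _ ⟨x, hx, rfl⟩
    have hx1 := inr_decompose_mem_iSup hP (h ⟨x, rfl⟩) 1
    rw [DirectSum.decompose_of_mem_same ℬ hx] at hx1
    exact hdeg hx1

theorem not_isNilpotent_range (hR2 : ∃ x y : R, x * y ≠ 0) :
    ¬ IsNilpotent (LinearMap.range (inrHom F F R)) := by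
  intro hnil
  obtain ⟨x, y, hxy⟩ := hR2
  have hsq : ⨆ gh : G × G, inrGrading ℬ gh.1 * inrGrading ℬ gh.2 =
      LinearMap.range (inrHom F F R) * LinearMap.range (inrHom F F R) := by
    rw [iSup_prod, ← iSup_inrGrading (ℬ := ℬ), Submodule.iSup_mul]
    simp_rw [Submodule.mul_iSup]
  set Rh := LinearMap.range (inrHom F F R)
  have hRR : Rh * Rh ≤ Rh := Submodule.mul_le.mpr fun _ ⟨a, ha⟩ _ ⟨b, hb⟩ =>
    ⟨a * b, by rw [← ha, ← hb]; exact inr_mul F a b⟩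
  have hsq_bot : Rh * Rh = ⊥ := by
    rcases eq_bot_or_range_le_of_isHomogeneous hsimple
      (P := fun gh : G × G => inrGrading ℬ gh.1 * inrGrading ℬ gh.2) (d := fun gh => gh.1 * gh.2)
      (fun gh => inrGrading_mul_le hmul gh.1 gh.2)
      (fun k gh => ⟨(k * gh.1, gh.2), by
        rw [← mul_assoc]; gcongr; exact inrGrading_mul_le hmul _ _⟩)
      (fun k gh => ⟨(gh.1, gh.2 * k), by
        rw [mul_assoc]; gcongr; exact inrGrading_mul_le hmul _ _⟩) with h | h
    · rwa [hsq] at h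
    · rw [hsq] at h
      rw [IsIdempotentElem.eq_zero_of_isNilpotent (le_antisymm hRR h) hnil,
        Submodule.zero_eq_bot, Submodule.bot_mul]
  have hxyR : (↑(x * y) : Unitization F R) ∈ Rh * Rh := by
    rw [inr_mul]
    exact Submodule.mul_mem_mul ⟨x, rfl⟩ ⟨y, rfl⟩
  rw [hsq_bot, Submodule.mem_bot] at hxyR
  exact hxy (inr_injective (hxyR.trans (inr_zero F).symm))

end GradedSimple

/-- The identity component `R_e` of a finite-dimensional graded simple algebra is
semiprimitive: its Jacobson radical is zero, i.e. every two-sided ideal of `R_e`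
consisting of quasi-regular elements is zero. -/
theorem stmt_8 {G : Type*} [Group G] [DecidableEq G] {F : Type*} [Field F]
    {R : Type*} [NonUnitalRing R] [Module F R] [SMulCommClass F R R] [IsScalarTower F R R]
    [FiniteDimensional F R]
    (ℬ : G → Submodule F R) [DirectSum.Decomposition ℬ]
    (hmul : ∀ g h : G, ∀ x ∈ ℬ g, ∀ y ∈ ℬ h, x * y ∈ ℬ (g * h))
    -- `R` is graded simple:
    (hR2 : ∃ x y : R, x * y ≠ 0)
    (hsimple : ∀ J : TwoSidedIdeal R,
      (∀ x ∈ J, ∀ g : G, ((DirectSum.decompose ℬ x) g : R) ∈ J) → J = ⊥ ∨ J = ⊤) :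
    -- `R_e = ℬ 1` is semiprimitive: any two-sided ideal `I` of `R_e` all of whose
    -- elements are quasi-regular (in `R_e`) is zero.
    ∀ I : Submodule F R, I ≤ ℬ (1 : G) →
      (∀ a ∈ ℬ (1 : G), ∀ x ∈ I, a * x ∈ I ∧ x * a ∈ I) →
      (∀ x ∈ I, ∃ y ∈ ℬ (1 : G), x + y + x * y = 0 ∧ x + y + y * x = 0) →
      I = ⊥ := by
  intro I hIle hId hqr
  have hleft : ∀ a ∈ ℬ 1, ∀ x ∈ I, a * x ∈ I := fun a ha x hx => (hId a ha x hx).1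
  have hI : IsNilpotent (I.map (inrHom F F R)) :=
    isNilpotent_map_of_quasiregular hmul hIle hleft fun x hx =>
      let ⟨y, hy, _, hyx⟩ := hqr x hx
      ⟨y, hy, hyx⟩
  rcases eq_bot_or_isNilpotent_inrGrading_one hmul hsimple (Submodule.map_mono hIle)
    (unitGrading_one_mul_map_le hleft) hI with h | h
  · exact Submodule.map_injective_of_injective inr_injective (h.trans (Submodule.map_bot _).symm)
  · refine absurd ?_ (not_isNilpotent_range hmul hsimple hR2)
    rw [← iSup_inrGrading (ℬ := ℬ)]
    exact Submodule.isNilpotent_iSup_of_isNilpotent_one (inrGrading_mul_le hmul)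
      finite_inrGrading_ne_bot h
end

section
/- The matrix algebra M_k(F^σ[H]) over a twisted group algebra, equipped with the G-grading deg(E_{ij} ⊗ x_h) = a_i^{-1} h a_j for a fixed k-tuple (a_1,...,a_k) ∈ G^k, is a graded simple algebra: it has no nonzero proper graded two-sided ideals. -/
/-!
A nonzero graded ideal contains a nonzero homogeneous element `y`, of degree `g` say. A basis
vector `E_{ij} ⊗ r_h` can occur in `y` only if `a_i⁻¹ h a_j = g`, so for fixed `i, j` at most
one `h` occurs. Hence, if `E_{ij} ⊗ r_{h₀}` occurs in `y`, multiplying `y` by `E_{pi} ⊗ r_h` on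
the left and `E_{jq} ⊗ r_1` on the right isolates a nonzero multiple of `E_{pq} ⊗ r_{h h₀}`
(the cocycle takes unit values). So the ideal contains every basis vector.
-/

open DirectSum

section

variable {ι K M κ : Type*} [DecidableEq ι] [Semiring K] [AddCommMonoid M] [Module K M]
  {ℬ : ι → Submodule K M} [Decomposition ℬ] {b : Module.Basis κ K M} {deg : κ → ι}

theorem Module.Basis.repr_decompose_deg (hb : ∀ i, b i ∈ ℬ (deg i)) (x : M) (i : κ) :
    b.repr (decompose ℬ x (deg i) : M) i = b.repr x i := by
  have : b.coord i ∘ₗ (ℬ (deg i)).subtype ∘ₗ component K ι (fun j => ℬ j) (deg i) ∘ₗ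
      (decomposeLinearEquiv ℬ).toLinearMap = b.coord i := by
    refine b.ext fun j => ?_
    by_cases hj : deg j = deg i
    · simp [← apply_eq_component, decomposeLinearEquiv_apply,
        decompose_of_mem_same ℬ (hj ▸ hb j)]
    · simp [← apply_eq_component, decomposeLinearEquiv_apply, decompose_of_mem_ne ℬ (hb j) hj,
        Finsupp.single_eq_of_ne fun h : i = j => hj (h ▸ rfl)]
  exact LinearMap.congr_fun this x

theorem Module.Basis.repr_eq_zero_of_mem_of_deg_ne (hb : ∀ i, b i ∈ ℬ (deg i)) {g : ι} {y : M}
    (hy : y ∈ ℬ g) {i : κ} (hi : deg i ≠ g) : b.repr y i = 0 := by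
  rw [← b.repr_decompose_deg hb, decompose_of_mem_ne ℬ hy hi.symm, map_zero, Finsupp.zero_apply]

theorem DirectSum.exists_decompose_ne_zero {x : M} (hx : x ≠ 0) :
    ∃ g, (decompose ℬ x g : M) ≠ 0 := by
  by_contra! h
  refine hx ((decompose ℬ).injective ?_)
  ext g : 2
  simp [h g]

end

theorem TwoSidedIdeal.eq_top_of_forall_smul_basis_mem {ι K R : Type*} [Semiring K]
    [NonUnitalRing R] [Module K R] (b : Module.Basis ι K R) (J : TwoSidedIdeal R)
    (hJ : ∀ (c : K) (i : ι), c • b i ∈ J) : J = ⊤ := by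
  refine eq_top_iff.2 fun x _ => ?_
  rw [← b.linearCombination_repr x, Finsupp.linearCombination_apply]
  exact sum_mem fun i _ => hJ _ i

section

variable {G : Type*} [Group G] {F : Type*} [Field F] {R : Type*} [NonUnitalRing R] [Module F R]
  [IsScalarTower F R R] {k : ℕ} {H : Subgroup G} {σ : H → H → Fˣ}
  {b : Module.Basis (Fin k × Fin k × H) F R}

theorem basis_mul_basis_mul_basis
    (hbmul : ∀ (i j i' j' : Fin k) (h h' : H),
      b (i, j, h) * b (i', j', h') = if j = i' then (σ h h' : F) • b (i, j', h * h') else 0)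
    (p i i' j' j q : Fin k) (h h' : H) :
    b (p, i, h) * b (i', j', h') * b (j, q, 1) =
      if i = i' ∧ j' = j then ((σ h h' : F) * σ (h * h') 1) • b (p, q, h * h') else 0 := by
  rw [hbmul]
  by_cases hi : i = i'
  · by_cases hj : j' = j <;> simp [hi, hj, smul_mul_assoc, hbmul, smul_smul]
  · simp [hi]

theorem basis_mul_mul_basis_of_mem [SMulCommClass F R R] [DecidableEq G]
    {ℬ : G → Submodule F R} [Decomposition ℬ] {a : Fin k → G}
    (hbgr : ∀ (i j : Fin k) (h : H), b (i, j, h) ∈ ℬ ((a i)⁻¹ * (h : G) * a j))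
    (hbmul : ∀ (i j i' j' : Fin k) (h h' : H),
      b (i, j, h) * b (i', j', h') = if j = i' then (σ h h' : F) • b (i, j', h * h') else 0)
    {y : R} {i j : Fin k} {h₀ : H} (hy : y ∈ ℬ ((a i)⁻¹ * (h₀ : G) * a j))
    (p q : Fin k) (h : H) :
    b (p, i, h) * y * b (j, q, 1) =
      (b.repr y (i, j, h₀) * σ h h₀ * σ (h * h₀) 1) • b (p, q, h * h₀) := by
  let L : R →ₗ[F] R := LinearMap.mulRight F (b (j, q, 1)) ∘ₗ LinearMap.mulLeft F (b (p, i, h))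
  have hL : ∀ (c : F) idx, L (c • b idx) = c • (b (p, i, h) * b idx * b (j, q, 1)) :=
    fun c idx => map_smul L c (b idx)
  calc b (p, i, h) * y * b (j, q, 1) = L ((b.repr y).sum fun idx c => c • b idx) := by
        rw [← Finsupp.linearCombination_apply, b.linearCombination_repr]; rfl
    _ = L (b.repr y (i, j, h₀) • b (i, j, h₀)) := by
        rw [map_finsuppSum]
        refine Finsupp.sum_eq_single (i, j, h₀) (fun ⟨i', j', h'⟩ _ hne => ?_) (by simp)
        rw [hL, basis_mul_basis_mul_basis hbmul]
        split_ifs with hij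
        · obtain ⟨rfl, rfl⟩ := hij
          have hh' : h' ≠ h₀ := fun hh => hne (by rw [hh])
          rw [b.repr_eq_zero_of_mem_of_deg_ne (deg := fun x => (a x.1)⁻¹ * x.2.2 * a x.2.1)
            (fun x => hbgr x.1 x.2.1 x.2.2) hy
            fun hdeg => hh' (Subtype.ext (mul_left_cancel (mul_right_cancel hdeg))), zero_smul]
        · exact smul_zero _
    _ = _ := by rw [hL, basis_mul_basis_mul_basis hbmul, if_pos ⟨rfl, rfl⟩, smul_smul, mul_assoc]

theorem TwoSidedIdeal.eq_top_of_homogeneous_mem [SMulCommClass F R R] [DecidableEq G]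
    {ℬ : G → Submodule F R} [Decomposition ℬ] {a : Fin k → G}
    (hbgr : ∀ (i j : Fin k) (h : H), b (i, j, h) ∈ ℬ ((a i)⁻¹ * (h : G) * a j))
    (hbmul : ∀ (i j i' j' : Fin k) (h h' : H),
      b (i, j, h) * b (i', j', h') = if j = i' then (σ h h' : F) • b (i, j', h * h') else 0)
    {J : TwoSidedIdeal R} {g : G} {y : R} (hyJ : y ∈ J) (hy : y ∈ ℬ g) (hy0 : y ≠ 0) :
    J = ⊤ := by
  obtain ⟨⟨i, j, h₀⟩, hc⟩ : ∃ idx, b.repr y idx ≠ 0 :=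
    Finsupp.ne_iff.1 (b.repr.map_ne_zero_iff.2 hy0)
  have hdeg : (a i)⁻¹ * (h₀ : G) * a j = g := by
    by_contra hne
    exact hc (b.repr_eq_zero_of_mem_of_deg_ne (deg := fun x => (a x.1)⁻¹ * x.2.2 * a x.2.1)
      (fun x => hbgr x.1 x.2.1 x.2.2) hy hne)
  subst hdeg
  refine eq_top_of_forall_smul_basis_mem b J fun d ⟨p, q, h⟩ => ?_
  set u : F := b.repr y (i, j, h₀) * σ (h * h₀⁻¹) h₀ * σ h 1
  have hu : u ≠ 0 := mul_ne_zero (mul_ne_zero hc (Units.ne_zero _)) (Units.ne_zero _)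
  have hsandwich := basis_mul_mul_basis_of_mem hbgr hbmul hy p q (h * h₀⁻¹)
  rw [inv_mul_cancel_right] at hsandwich
  have : ((d * u⁻¹) • b (p, i, h * h₀⁻¹)) * y * b (j, q, 1) = d • b (p, q, h) := by
    rw [smul_mul_assoc, smul_mul_assoc, hsandwich, smul_smul, mul_assoc, inv_mul_cancel₀ hu,
      mul_one]
  exact this ▸ J.mul_mem_right _ _ (J.mul_mem_left _ _ hyJ)

end

theorem stmt_17_general {G : Type*} [Group G] [DecidableEq G] {F : Type*} [Field F]
    {R : Type*} [NonUnitalRing R] [Module F R] [SMulCommClass F R R] [IsScalarTower F R R]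
    (ℬ : G → Submodule F R) [DirectSum.Decomposition ℬ]
    (k : ℕ) (H : Subgroup G)
    (σ : H → H → Fˣ)
    (a : Fin k → G) (b : Module.Basis (Fin k × Fin k × H) F R)
    (hbgr : ∀ (i j : Fin k) (h : H), b (i, j, h) ∈ ℬ ((a i)⁻¹ * (h : G) * a j))
    (hbmul : ∀ (i j i' j' : Fin k) (h h' : H),
      b (i, j, h) * b (i', j', h') =
        if j = i' then (σ h h' : F) • b (i, j', h * h') else 0) :
    ∀ J : TwoSidedIdeal R,
      (∀ x ∈ J, ∀ g : G, ((DirectSum.decompose ℬ x) g : R) ∈ J) → J = ⊥ ∨ J = ⊤ := by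
  intro J hJ
  refine or_iff_not_imp_left.2 fun hJ0 => ?_
  obtain ⟨x, hxJ, hx0⟩ : ∃ x ∈ J, x ≠ 0 := by
    by_contra! h
    exact hJ0 (eq_bot_iff.2 fun x hx => (TwoSidedIdeal.mem_bot R).2 (h x hx))
  obtain ⟨g, hg⟩ := exists_decompose_ne_zero (ℬ := ℬ) hx0
  exact TwoSidedIdeal.eq_top_of_homogeneous_mem hbgr hbmul (hJ x hxJ g) (Submodule.coe_mem _) hg

/-- The matrix algebra `M_k(F^σ[H])` over a twisted group algebra, with the `G`-grading
induced by a `k`-tuple `(a_1, ..., a_k) ∈ G^k` via `deg (E_{ij} ⊗ r_h) = a_i⁻¹ h a_j`,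
is graded simple: it has no nonzero proper graded two-sided ideals. Here a `G`-graded
algebra `R` with a homogeneous basis `(E_{ij} ⊗ r_h)` satisfying the multiplication
rules of `M_k(F^σ[H])` is a copy of `M_k(F^σ[H])` with the induced grading. -/
theorem stmt_17 {G : Type*} [Group G] [DecidableEq G] {F : Type*} [Field F]
    {R : Type*} [NonUnitalRing R] [Module F R] [SMulCommClass F R R] [IsScalarTower F R R]
    (ℬ : G → Submodule F R) [DirectSum.Decomposition ℬ]
    (hmul : ∀ g h : G, ∀ x ∈ ℬ g, ∀ y ∈ ℬ h, x * y ∈ ℬ (g * h))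
    (k : ℕ) (hk : 0 < k) (H : Subgroup G) (hH : Finite H)
    (σ : H → H → Fˣ)
    (hσ : ∀ x y z : H, σ x y * σ (x * y) z = σ y z * σ x (y * z))
    (a : Fin k → G) (b : Module.Basis (Fin k × Fin k × H) F R)
    (hbgr : ∀ (i j : Fin k) (h : H), b (i, j, h) ∈ ℬ ((a i)⁻¹ * (h : G) * a j))
    (hbmul : ∀ (i j i' j' : Fin k) (h h' : H),
      b (i, j, h) * b (i', j', h') =
        if j = i' then (σ h h' : F) • b (i, j', h * h') else 0) :
    ∀ J : TwoSidedIdeal R,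
      (∀ x ∈ J, ∀ g : G, ((DirectSum.decompose ℬ x) g : R) ∈ J) → J = ⊥ ∨ J = ⊤ :=
  stmt_17_general ℬ k H σ a b hbgr hbmul
end
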